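/- Let M be a von Neumann algebra with MASA A, let ψ be a normal faithful state with A ⊆ M^ψ and σ^ψ periodic, and let N = M^ψ with E : M → N the ψ-preserving conditional expectation obtained by averaging σ^ψ_t over a period. If u ∈ M is a unitary normalizing A with ufu* = α(f) for all f ∈ A, then: (i) E(u)f = α(f)E(u) for all f ∈ A; (ii) in the polar decomposition E(u) = w(u)p(u), the positive part p(u) lies in A and the partial isometry w(u) lies in the normalizer of A inside N. -/

import Mathlib

/- ## Common framework

Mathlib does not yet have a developed theory of von Neumann algebras (types, modular theory,
tensor products, free probability), so we set up a self-contained framework.  A von Neumann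
algebra is modelled concretely as a subset of `B(H)` (for `H` a complex Hilbert space) which is
star-closed and equal to its double commutant (von Neumann's bicommutant theorem).  States,
normality (complete additivity on orthogonal families of projections), centralizers, modular
dynamics (a one-parameter group of `*`-automorphisms satisfying the KMS condition and having the
centralizer as fixed-point algebra), type classification via projections (minimal/finite),
fullness (via triviality of norm-bounded centralizing sequences), hyperfiniteness, Cartan
subalgebras, tensor product decompositions (commuting generating subalgebras admitting a faithful
normal product state whose modular group leaves both factors invariant), and the free group
factor `L(F_∞)` (an algebra generated by an infinite `*`-free family of Haar unitaries with
respect to a faithful normal trace) are all defined below. -/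

noncomputable section

namespace VNPaper

variable {H : Type*} [NormedAddCommGroup H] [InnerProductSpace ℂ H] [CompleteSpace H]

/-- A subset of `B(H)` is a von Neumann algebra if it is star-closed and equals its double
commutant. -/
def IsVonNeumannAlgebraOn (S : Set (H →L[ℂ] H)) : Prop :=
  (∀ x ∈ S, star x ∈ S) ∧ Set.centralizer (Set.centralizer S) = S

def IsProjectionOp (p : H →L[ℂ] H) : Prop := p * p = p ∧ IsSelfAdjoint p

def IsUnitaryOp (u : H →L[ℂ] H) : Prop := star u * u = 1 ∧ u * star u = 1

def IsPartialIsometryOp (v : H →L[ℂ] H) : Prop := v * star v * v = v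

def IsPositiveOp (a : H →L[ℂ] H) : Prop :=
  IsSelfAdjoint a ∧ ∀ v : H, 0 ≤ (inner ℂ (a v) v : ℂ).re

/-- Order on projections: `q ≤ p`. -/
def ProjLE (q p : H →L[ℂ] H) : Prop := q * p = q ∧ p * q = q

/-- Murray–von Neumann equivalence of projections realized inside `S`. -/
def MvNEquivIn (S : Set (H →L[ℂ] H)) (p q : H →L[ℂ] H) : Prop :=
  ∃ v ∈ S, star v * v = p ∧ v * star v = q

/-- A projection is finite in `S` if it is not Murray–von Neumann equivalent to a proper
subprojection of itself. -/
def IsFiniteProjIn (S : Set (H →L[ℂ] H)) (p : H →L[ℂ] H) : Prop :=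
  ∀ q ∈ S, IsProjectionOp q → ProjLE q p → MvNEquivIn S q p → q = p

def IsMinimalProjIn (S : Set (H →L[ℂ] H)) (p : H →L[ℂ] H) : Prop :=
  IsProjectionOp p ∧ p ≠ 0 ∧ ∀ q ∈ S, IsProjectionOp q → ProjLE q p → q = 0 ∨ q = p

/-- A von Neumann algebra is diffuse if it has no nonzero minimal projections. -/
def IsDiffuseSet (S : Set (H →L[ℂ] H)) : Prop :=
  IsVonNeumannAlgebraOn S ∧ ∀ p ∈ S, ¬ IsMinimalProjIn S p

/-- A factor: a von Neumann algebra with trivial center. -/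
def IsFactorSet (S : Set (H →L[ℂ] H)) : Prop :=
  IsVonNeumannAlgebraOn S ∧
    S ∩ Set.centralizer S = Set.range (fun c : ℂ => c • (1 : H →L[ℂ] H))

/-- Type I factor: has a minimal projection. -/
def IsTypeIFactor (S : Set (H →L[ℂ] H)) : Prop :=
  IsFactorSet S ∧ ∃ p ∈ S, IsMinimalProjIn S p

/-- Type II factor: no minimal projections but some nonzero finite projection. -/
def IsTypeIIFactor (S : Set (H →L[ℂ] H)) : Prop :=
  IsFactorSet S ∧ (∀ p ∈ S, ¬ IsMinimalProjIn S p) ∧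
    ∃ p ∈ S, IsProjectionOp p ∧ p ≠ 0 ∧ IsFiniteProjIn S p

/-- Type II₁ factor: type II with finite unit. -/
def IsTypeII1Factor (S : Set (H →L[ℂ] H)) : Prop :=
  IsTypeIIFactor S ∧ IsFiniteProjIn S (1 : H →L[ℂ] H)

/-- Type III factor: no nonzero finite projections. -/
def IsTypeIIIFactor (S : Set (H →L[ℂ] H)) : Prop :=
  IsFactorSet S ∧ ∀ p ∈ S, IsProjectionOp p → IsFiniteProjIn S p → p = 0

/-- A state on `S` (recorded as a linear functional on all of `B(H)`; only its restriction to `S`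
matters). -/
def IsStateOn (S : Set (H →L[ℂ] H)) (φ : (H →L[ℂ] H) →ₗ[ℂ] ℂ) : Prop :=
  φ 1 = 1 ∧ ∀ x ∈ S, 0 ≤ (φ (star x * x)).re ∧ (φ (star x * x)).im = 0

def IsFaithfulOn (S : Set (H →L[ℂ] H)) (φ : (H →L[ℂ] H) →ₗ[ℂ] ℂ) : Prop :=
  ∀ x ∈ S, φ (star x * x) = 0 → x = 0

/-- `z` is the least upper bound in `S` of a family of projections `P`. -/
def IsLubProjOf (S P : Set (H →L[ℂ] H)) (z : H →L[ℂ] H) : Prop :=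
  z ∈ S ∧ IsProjectionOp z ∧ (∀ p ∈ P, ProjLE p z) ∧
    ∀ w ∈ S, IsProjectionOp w → (∀ p ∈ P, ProjLE p w) → ProjLE z w

/-- Normality of a functional: complete additivity on orthogonal families of projections. -/
def IsNormalOn (S : Set (H →L[ℂ] H)) (φ : (H →L[ℂ] H) →ₗ[ℂ] ℂ) : Prop :=
  ∀ P : Set (H →L[ℂ] H), (∀ p ∈ P, p ∈ S ∧ IsProjectionOp p) →
    (∀ p ∈ P, ∀ q ∈ P, p ≠ q → p * q = 0) →
    ∀ z, IsLubProjOf S P z → HasSum (fun p : P => φ (p : H →L[ℂ] H)) (φ z)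

/-- Normal faithful state. -/
def IsNFState (S : Set (H →L[ℂ] H)) (φ : (H →L[ℂ] H) →ₗ[ℂ] ℂ) : Prop :=
  IsStateOn S φ ∧ IsFaithfulOn S φ ∧ IsNormalOn S φ

/-- The centralizer `S^φ = {x ∈ S : φ(xy) = φ(yx) ∀ y ∈ S}` of a state. -/
def centralizerState (S : Set (H →L[ℂ] H)) (φ : (H →L[ℂ] H) →ₗ[ℂ] ℂ) :
    Set (H →L[ℂ] H) :=
  {x | x ∈ S ∧ ∀ y ∈ S, φ (x * y) = φ (y * x)}

/-- Closure in the weak operator topology. -/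
def wotClosure (X : Set (H →L[ℂ] H)) : Set (H →L[ℂ] H) :=
  {T | ∀ ε > (0 : ℝ), ∀ L : List (H × H),
    ∃ x ∈ X, ∀ p ∈ L, ‖(inner ℂ ((T - x) p.1) p.2 : ℂ)‖ < ε}

/-- `σ` is the modular automorphism group of the state `φ` on `S`: a one-parameter group of
`*`-automorphisms of `S` preserving `φ`, whose fixed point algebra is the centralizer of `φ`,
satisfying the KMS boundary condition. -/
structure IsModularDynamics (S : Set (H →L[ℂ] H)) (φ : (H →L[ℂ] H) →ₗ[ℂ] ℂ)
    (σ : ℝ → (H →L[ℂ] H) →ₗ[ℂ] (H →L[ℂ] H)) : Prop where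
  mapsTo : ∀ t, Set.MapsTo (σ t) S S
  σ_zero : ∀ x ∈ S, σ 0 x = x
  σ_add : ∀ s t : ℝ, ∀ x ∈ S, σ (s + t) x = σ s (σ t x)
  σ_one : ∀ t, σ t 1 = 1
  σ_mul : ∀ t, ∀ x ∈ S, ∀ y ∈ S, σ t (x * y) = σ t x * σ t y
  σ_star : ∀ t, ∀ x ∈ S, σ t (star x) = star (σ t x)
  invariant : ∀ t, ∀ x ∈ S, φ (σ t x) = φ x
  fixed_iff : ∀ x ∈ S, (x ∈ centralizerState S φ ↔ ∀ t, σ t x = x)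
  kms : ∀ x ∈ S, ∀ y ∈ S, ∃ F : ℂ → ℂ,
    ContinuousOn F {z : ℂ | 0 ≤ z.im ∧ z.im ≤ 1} ∧
    DifferentiableOn ℂ F {z : ℂ | 0 < z.im ∧ z.im < 1} ∧
    (∀ t : ℝ, F t = φ (σ t x * y)) ∧ (∀ t : ℝ, F (t + Complex.I) = φ (y * σ t x))

/-- The group of periods of `σ` on `S` is exactly `T·ℤ` ("periodic of period exactly `T`"). -/
def PeriodGroupEq (S : Set (H →L[ℂ] H)) (σ : ℝ → (H →L[ℂ] H) →ₗ[ℂ] (H →L[ℂ] H))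
    (T : ℝ) : Prop :=
  {t : ℝ | ∀ x ∈ S, σ t x = x} = {t : ℝ | ∃ n : ℤ, t = n * T}

/-- Type III_λ factor (0 < λ < 1), characterized à la Connes: a type III factor possessing a
normal faithful state whose modular group is periodic of period exactly `2π/log λ` and whose
centralizer is a II₁ factor. -/
def IsTypeIIIlamFactor (lam : ℝ) (S : Set (H →L[ℂ] H)) : Prop :=
  IsTypeIIIFactor S ∧ 0 < lam ∧ lam < 1 ∧
    ∃ (φ : (H →L[ℂ] H) →ₗ[ℂ] ℂ) (σ : ℝ → (H →L[ℂ] H) →ₗ[ℂ] (H →L[ℂ] H)),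
      IsNFState S φ ∧ IsModularDynamics S φ σ ∧
      PeriodGroupEq S σ (2 * Real.pi / Real.log lam) ∧
      IsTypeII1Factor (centralizerState S φ)

/-- Fullness (for algebras with separable predual), via Connes' characterization: every
norm-bounded centralizing sequence is trivial (asymptotically scalar in the strong-* sense). -/
def IsFullFactorSet (S : Set (H →L[ℂ] H)) : Prop :=
  IsFactorSet S ∧
  ∀ x : ℕ → H →L[ℂ] H, (∀ n, x n ∈ S) → (∃ C : ℝ, ∀ n, ‖x n‖ ≤ C) →
    (∀ φ : (H →L[ℂ] H) →ₗ[ℂ] ℂ, IsNFState S φ →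
      ∀ ε > (0 : ℝ), ∃ N, ∀ n ≥ N, ∀ y ∈ S, ‖y‖ ≤ 1 → ‖φ (x n * y - y * x n)‖ ≤ ε) →
    ∃ c : ℕ → ℂ, ∀ v : H,
      Filter.Tendsto
        (fun n => ‖(x n - c n • (1 : H →L[ℂ] H)) v‖ +
          ‖(star (x n) - star (c n) • (1 : H →L[ℂ] H)) v‖)
        Filter.atTop (nhds 0)

/-- A finite-dimensional unital star-subalgebra of `B(H)`. -/
def IsFinDimStarSubalgebra (A : Set (H →L[ℂ] H)) : Prop :=
  (1 : H →L[ℂ] H) ∈ A ∧ (∀ x ∈ A, star x ∈ A) ∧ (∀ x ∈ A, ∀ y ∈ A, x * y ∈ A) ∧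
    ∃ b : Finset (H →L[ℂ] H),
      A = (Submodule.span ℂ (b : Set (H →L[ℂ] H)) : Set (H →L[ℂ] H))

/-- Hyperfiniteness: `S` is generated by an increasing sequence of finite-dimensional
star-subalgebras. -/
def IsHyperfiniteSet (S : Set (H →L[ℂ] H)) : Prop :=
  IsVonNeumannAlgebraOn S ∧ ∃ F : ℕ → Set (H →L[ℂ] H), Monotone F ∧
    (∀ n, IsFinDimStarSubalgebra (F n) ∧ F n ⊆ S) ∧
    Set.centralizer (Set.centralizer (⋃ n, F n)) = S

def IsAbelianVNSubalgebra (S C : Set (H →L[ℂ] H)) : Prop :=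
  IsVonNeumannAlgebraOn C ∧ C ⊆ S ∧ ∀ x ∈ C, ∀ y ∈ C, x * y = y * x

/-- A maximal abelian subalgebra of `S`. -/
def IsMasaIn (S A : Set (H →L[ℂ] H)) : Prop :=
  IsAbelianVNSubalgebra S A ∧ ∀ x ∈ S, (∀ a ∈ A, x * a = a * x) → x ∈ A

/-- A conditional expectation of `M` onto the subalgebra `A`. -/
def IsCondExpOnto (M A : Set (H →L[ℂ] H)) (E : (H →L[ℂ] H) →ₗ[ℂ] (H →L[ℂ] H)) : Prop :=
  Set.MapsTo E M A ∧ (∀ a ∈ A, E a = a) ∧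
    (∀ a ∈ A, ∀ x ∈ M, ∀ b ∈ A, E (a * x * b) = a * E x * b) ∧
    (∀ x ∈ M, IsPositiveOp x → IsPositiveOp (E x))

/-- A faithful normal conditional expectation of `M` onto `A`. -/
def IsNFCondExp (M A : Set (H →L[ℂ] H)) (E : (H →L[ℂ] H) →ₗ[ℂ] (H →L[ℂ] H)) : Prop :=
  IsCondExpOnto M A E ∧ (∀ x ∈ M, E (star x * x) = 0 → x = 0) ∧
    ∀ φ : (H →L[ℂ] H) →ₗ[ℂ] ℂ, IsNormalOn A φ → IsNormalOn M (φ.comp E)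

/-- Unitaries of `M` normalizing `A`. -/
def unitaryNormalizerIn (M A : Set (H →L[ℂ] H)) : Set (H →L[ℂ] H) :=
  {u | u ∈ M ∧ IsUnitaryOp u ∧ (∀ a ∈ A, u * a * star u ∈ A) ∧
    ∀ a ∈ A, star u * a * u ∈ A}

/-- A Cartan subalgebra: a MASA admitting a faithful normal conditional expectation, whose
normalizer generates `M`. -/
def IsCartanSubalgebra (M A : Set (H →L[ℂ] H)) : Prop :=
  IsMasaIn M A ∧ (∃ E, IsNFCondExp M A E) ∧
    Set.centralizer (Set.centralizer (unitaryNormalizerIn M A)) = M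

/-- Products of two sets of operators. -/
def setProd2 (X Y : Set (H →L[ℂ] H)) : Set (H →L[ℂ] H) :=
  {z | ∃ x ∈ X, ∃ y ∈ Y, z = x * y}

/-- Products of three sets of operators. -/
def setProd3 (X Y Z : Set (H →L[ℂ] H)) : Set (H →L[ℂ] H) :=
  {w | ∃ x ∈ X, ∃ y ∈ Y, ∃ z ∈ Z, w = x * y * z}

/-- `M = A₁ ⊗ A₂`: the subalgebras `A₁`, `A₂` commute, generate `M`, and admit a faithful
normal product state whose modular group leaves both subalgebras invariant (Takesaki's
criterion for splitting as a tensor product). -/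
structure TensorDecomposition (M A₁ A₂ : Set (H →L[ℂ] H)) : Prop where
  vnM : IsVonNeumannAlgebraOn M
  vn₁ : IsVonNeumannAlgebraOn A₁
  vn₂ : IsVonNeumannAlgebraOn A₂
  sub₁ : A₁ ⊆ M
  sub₂ : A₂ ⊆ M
  commute : ∀ x ∈ A₁, ∀ y ∈ A₂, x * y = y * x
  generates : Set.centralizer (Set.centralizer (setProd2 A₁ A₂)) = M
  split : ∃ (φ : (H →L[ℂ] H) →ₗ[ℂ] ℂ) (σ : ℝ → (H →L[ℂ] H) →ₗ[ℂ] (H →L[ℂ] H)),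
    IsNFState M φ ∧ IsModularDynamics M φ σ ∧
    (∀ x ∈ A₁, ∀ y ∈ A₂, φ (x * y) = φ x * φ y) ∧
    (∀ t, Set.MapsTo (σ t) A₁ A₁ ∧ Set.MapsTo (σ t) A₂ A₂)

/-- The multiplicative subgroup `{a^n : n ∈ ℤ}` of `ℝ`. -/
def zpowSet (a : ℝ) : Set ℝ := {x | ∃ n : ℤ, x = a ^ n}

/-- Integer powers of a unitary. -/
def zpowU (u : H →L[ℂ] H) (k : ℤ) : H →L[ℂ] H :=
  if 0 ≤ k then u ^ k.toNat else (star u) ^ (-k).toNat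

/-- The centered Laurent polynomials in the unitary `u`. -/
def laurentCentered (u : H →L[ℂ] H) : Set (H →L[ℂ] H) :=
  (Submodule.span ℂ {x | ∃ k : ℤ, k ≠ 0 ∧ x = zpowU u k} : Set (H →L[ℂ] H))

/-- `S` is isomorphic to the free group factor `L(F_∞)`: it is generated by an infinite family
of Haar unitaries which are `*`-free with respect to a faithful normal trace. -/
def IsFreeGroupFactorInfinity (S : Set (H →L[ℂ] H)) : Prop :=
  IsVonNeumannAlgebraOn S ∧
  ∃ (u : ℕ → H →L[ℂ] H) (τ : (H →L[ℂ] H) →ₗ[ℂ] ℂ),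
    (∀ n, u n ∈ S ∧ IsUnitaryOp (u n)) ∧
    Set.centralizer (Set.centralizer (Set.range u)) = S ∧
    IsNFState S τ ∧ (∀ x ∈ S, ∀ y ∈ S, τ (x * y) = τ (y * x)) ∧
    (∀ n, ∀ k : ℤ, k ≠ 0 → τ (zpowU (u n) k) = 0) ∧
    ∀ (m : ℕ) (i : Fin (m + 1) → ℕ) (a : Fin (m + 1) → H →L[ℂ] H),
      (∀ j, a j ∈ laurentCentered (u (i j))) →
      (∀ j : Fin m, i j.castSucc ≠ i j.succ) →
      τ (List.ofFn a).prod = 0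

/-- The free Araki–Woods factor `T_λ` (0 < λ < 1), recorded through its characteristic
properties: it is a full factor of type III_λ and the centralizer of its free quasi-free state
(a normal faithful state whose modular group is periodic of period exactly `2π/log λ`) is
isomorphic to `L(F_∞)`. -/
def IsFreeArakiWoodsFactor (lam : ℝ) (S : Set (H →L[ℂ] H)) : Prop :=
  IsFullFactorSet S ∧ IsTypeIIIlamFactor lam S ∧
  ∃ (ψ : (H →L[ℂ] H) →ₗ[ℂ] ℂ) (σ : ℝ → (H →L[ℂ] H) →ₗ[ℂ] (H →L[ℂ] H)),
    IsNFState S ψ ∧ IsModularDynamics S ψ σ ∧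
    PeriodGroupEq S σ (2 * Real.pi / Real.log lam) ∧
    IsFreeGroupFactorInfinity (centralizerState S ψ)

end VNPaper

namespace VNPaper

section AuxPartialIsometry

open scoped InnerProductSpace

variable {H : Type*} [NormedAddCommGroup H] [InnerProductSpace ℂ H] [CompleteSpace H]

/-- The star-subalgebra of operators commuting with `b`. -/
def commStar (b : H →L[ℂ] H) : StarSubalgebra ℂ (H →L[ℂ] H) where
  carrier := {x | b * x = x * b ∧ b * star x = star x * b}
  mul_mem' := fun {x y} hx hy => ⟨by rw [← mul_assoc, hx.1, mul_assoc, hy.1, mul_assoc],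
    by rw [star_mul, ← mul_assoc, hy.2, mul_assoc, hx.2, mul_assoc]⟩
  add_mem' := fun {x y} hx hy => ⟨by rw [mul_add, hx.1, hy.1, add_mul],
    by rw [star_add, mul_add, hx.2, hy.2, add_mul]⟩
  algebraMap_mem' := fun c => ⟨(Algebra.commutes c b).symm,
    by rw [← algebraMap_star_comm]; exact (Algebra.commutes _ b).symm⟩
  star_mem' := fun {x} hx => ⟨hx.2, by rw [star_star]; exact hx.1⟩

lemma isClosed_commStar (b : H →L[ℂ] H) : IsClosed ((commStar b : StarSubalgebra ℂ (H →L[ℂ] H)) : Set (H →L[ℂ] H)) := by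
  have h1 : IsClosed {x : H →L[ℂ] H | b * x = x * b} :=
    isClosed_eq (continuous_mul_left b) (continuous_mul_right b)
  have h2 : IsClosed {x : H →L[ℂ] H | b * star x = star x * b} :=
    IsClosed.preimage continuous_star h1
  exact h1.inter h2

lemma mem_commStar_iff (b x : H →L[ℂ] H) :
    x ∈ commStar b ↔ b * x = x * b ∧ b * star x = star x * b := Iff.rfl

lemma cfc_mem_elemental (q : H →L[ℂ] H) (f : ℂ → ℂ) :
    cfc f q ∈ StarAlgebra.elemental ℂ q := by
  refine cfc_cases (fun x => x ∈ StarAlgebra.elemental ℂ q) q f (zero_mem _) ?_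
  intro hf ha
  have : cfcHom ha (R := ℂ) = (StarAlgebra.elemental ℂ q).subtype.comp
      (continuousFunctionalCalculus q) := @cfcHom_eq_of_isStarNormal _ _ q ha
  rw [this]
  exact SetLike.coe_mem _

lemma commute_cfc (b q : H →L[ℂ] H) (hq : IsSelfAdjoint q) (hbq : b * q = q * b)
    (f : ℝ → ℝ) : b * cfc f q = cfc f q * b := by
  have hmem : cfc f q ∈ StarAlgebra.elemental ℂ q := by
    rw [cfc_real_eq_complex f hq]
    exact cfc_mem_elemental q _
  have hsub : StarAlgebra.elemental ℂ q ≤ commStar b :=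
    StarAlgebra.elemental.le_of_mem (isClosed_commStar b)
      ⟨hbq, by rw [hq.star_eq]; exact hbq⟩
  exact (hsub hmem).1

lemma exists_partial_isometry (v p : H →L[ℂ] H) (hvp : ∀ ξ, ‖v ξ‖ = ‖p ξ‖) :
    ∃ w S : H →L[ℂ] H,
      w * p = v ∧ w * S = w ∧ star w * w = S ∧
      (∀ x : H →L[ℂ] H, x * p = 0 → x * S = 0) ∧
      (∀ y : H →L[ℂ] H, y * p = p * y → star y * p = p * star y → y * S = S * y) := by
  classical
  set R : Submodule ℂ H := LinearMap.range (p : H →ₗ[ℂ] H) with hRdef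
  set K : Submodule ℂ H := R.topologicalClosure with hKdef
  haveI : CompleteSpace K := R.isClosed_topologicalClosure.completeSpace_coe
  have hker : ∀ ξ η : H, p ξ = p η → v ξ = v η := by
    intro ξ η h
    have h0 : ‖v ξ - v η‖ = 0 := by
      rw [← map_sub, hvp, map_sub, h, sub_self, norm_zero]
    exact sub_eq_zero.mp (norm_eq_zero.mp h0)
  have hmemR : ∀ x : R, ∃ ξ : H, p ξ = (x : H) := fun x => LinearMap.mem_range.mp x.2
  let g0 : R → H := fun x => v (hmemR x).choose
  have hg0 : ∀ (x : R) (ξ : H), p ξ = (x : H) → g0 x = v ξ := by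
    intro x ξ h
    exact hker _ _ ((hmemR x).choose_spec.trans h.symm)
  have g0_add : ∀ x y : R, g0 (x + y) = g0 x + g0 y := by
    intro x y
    obtain ⟨ξ, hξ⟩ := hmemR x
    obtain ⟨η, hη⟩ := hmemR y
    rw [hg0 x ξ hξ, hg0 y η hη, hg0 (x + y) (ξ + η) (by rw [map_add, hξ, hη]; rfl), map_add]
  have g0_smul : ∀ (c : ℂ) (x : R), g0 (c • x) = c • g0 x := by
    intro c x
    obtain ⟨ξ, hξ⟩ := hmemR x
    rw [hg0 x ξ hξ, hg0 (c • x) (c • ξ) (by rw [map_smul, hξ]; rfl), map_smul]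
  let g1 : R →ₗ[ℂ] H :=
    { toFun := g0, map_add' := g0_add, map_smul' := g0_smul }
  have g0_norm : ∀ x : R, ‖g0 x‖ = ‖x‖ := by
    intro x
    obtain ⟨ξ, hξ⟩ := hmemR x
    rw [hg0 x ξ hξ, hvp, hξ]
    rfl
  let g : R →L[ℂ] H := g1.mkContinuous 1 (fun x => by
    rw [one_mul]; exact le_of_eq (g0_norm x))
  have hg_apply : ∀ x : R, g x = g0 x := fun x => rfl
  -- the inclusion of R into K
  let e1 : R →ₗ[ℂ] K := Submodule.inclusion R.le_topologicalClosure
  have he1_coe : ∀ x : R, ((e1 x : K) : H) = (x : H) := fun x => rfl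
  have he1_norm : ∀ x : R, ‖e1 x‖ = ‖x‖ := fun x => rfl
  let e : R →L[ℂ] K := e1.mkContinuous 1 (fun x => by rw [one_mul]; exact le_of_eq (he1_norm x))
  have he_apply : ∀ x : R, e x = e1 x := fun x => rfl
  have he_norm : ∀ x : R, ‖e x‖ = ‖x‖ := fun x => rfl
  have h_e : IsUniformInducing e :=
    (AddMonoidHomClass.isometry_of_norm e he_norm).isUniformInducing
  have h_dense : DenseRange e := by
    intro k
    rw [closure_subtype]
    have himg : Subtype.val '' Set.range e = (R : Set H) := by
      ext z
      constructor
      · rintro ⟨k', ⟨x, rfl⟩, rfl⟩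
        exact (he1_coe x) ▸ x.2
      · intro hz
        exact ⟨e ⟨z, hz⟩, ⟨⟨z, hz⟩, rfl⟩, rfl⟩
    rw [himg]
    rw [← Submodule.topologicalClosure_coe]
    exact k.2
  let gh : K →L[ℂ] H := g.extend e
  have ghe : ∀ x : R, gh (e x) = g x := fun x =>
    ContinuousLinearMap.extend_eq g h_dense h_e x
  have gh_norm : ∀ k : K, ‖gh k‖ = ‖k‖ := by
    intro k
    refine h_dense.induction_on k (isClosed_eq gh.continuous.norm continuous_norm) ?_
    intro x
    rw [ghe, hg_apply, g0_norm, he_norm]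
  let gi : K →ₗᵢ[ℂ] H := ⟨gh.toLinearMap, gh_norm⟩
  have ginner : ∀ k k' : K, ⟪gh k, gh k'⟫_ℂ = ⟪(k : H), (k' : H)⟫_ℂ := by
    intro k k'
    have := gi.inner_map_map k k'
    rwa [Submodule.coe_inner] at this
  let P : H →L[ℂ] K := K.orthogonalProjectionOnto
  let S : H →L[ℂ] H := K.subtypeL.comp P
  let w : H →L[ℂ] H := gh.comp P
  have hS_apply : ∀ η : H, S η = (P η : H) := fun η => rfl
  have hw_apply : ∀ η : H, w η = gh (P η) := fun η => rfl
  have hSK : ∀ η : H, S η ∈ K := fun η => (P η).2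
  have hSmem : ∀ z ∈ K, S z = z := by
    intro z hz
    exact (Submodule.starProjection_eq_self_iff (K := K)).mpr hz
  have hSsa : IsSelfAdjoint S := isSelfAdjoint_starProjection K
  -- w ∘ p = v
  have hwp : w * p = v := by
    ext ξ
    have hmem : p ξ ∈ K := R.le_topologicalClosure ⟨ξ, rfl⟩
    have hP : P (p ξ) = ⟨p ξ, hmem⟩ := Subtype.ext ((Submodule.starProjection_eq_self_iff (K := K)).mpr hmem)
    have hee : e ⟨p ξ, ⟨ξ, rfl⟩⟩ = (⟨p ξ, hmem⟩ : K) := Subtype.ext rfl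
    rw [ContinuousLinearMap.mul_apply, hw_apply, hP, ← hee, ghe, hg_apply,
      hg0 _ ξ rfl]
  -- vanishing lemma
  have hvanish : ∀ x : H →L[ℂ] H, x * p = 0 → x * S = 0 := by
    intro x hx
    ext η
    have hcl : (K : Set H) ⊆ {z | x z = 0} := by
      rw [hKdef, Submodule.topologicalClosure_coe]
      refine closure_minimal ?_ (isClosed_singleton.preimage x.continuous)
      rintro z ⟨ξ, rfl⟩
      have := ContinuousLinearMap.ext_iff.mp hx ξ
      simpa [ContinuousLinearMap.mul_apply] using this
    have : x (S η) = 0 := hcl (hSK η)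
    simpa [ContinuousLinearMap.mul_apply] using this
  -- invariance lemma
  have hinv : ∀ y : H →L[ℂ] H, y * p = p * y → ∀ z ∈ (K : Set H), y z ∈ (K : Set H) := by
    intro y hy z hz
    have hyR : y '' (R : Set H) ⊆ (R : Set H) := by
      rintro _ ⟨_, ⟨ξ, rfl⟩, rfl⟩
      have : y (p ξ) = p (y ξ) := by
        have := ContinuousLinearMap.ext_iff.mp hy ξ
        simpa [ContinuousLinearMap.mul_apply] using this
      rw [ContinuousLinearMap.coe_coe, this]
      exact ⟨y ξ, rfl⟩
    have h1 : (K : Set H) = closure (R : Set H) := by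
      rw [hKdef, Submodule.topologicalClosure_coe]
    rw [h1] at hz ⊢
    have := image_closure_subset_closure_image (f := y) y.continuous (s := (R : Set H))
    exact closure_mono hyR (this ⟨z, hz, rfl⟩)
  have hcomm : ∀ y : H →L[ℂ] H, y * p = p * y → star y * p = p * star y →
      y * S = S * y := by
    intro y h1 h2
    have step1 : S * (y * S) = y * S := by
      ext η
      simp only [ContinuousLinearMap.mul_apply]
      exact hSmem _ (hinv y h1 _ (hSK η))
    have step2 : S * (star y * S) = star y * S := by
      ext η
      simp only [ContinuousLinearMap.mul_apply]
      exact hSmem _ (hinv (star y) h2 _ (hSK η))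
    have step3 : S * y * S = S * y := by
      have := congrArg star step2
      simpa [star_mul, mul_assoc, hSsa.star_eq, star_star] using this
    calc y * S = S * (y * S) := step1.symm
      _ = S * y * S := by rw [mul_assoc]
      _ = S * y := step3
  -- star w * w = S
  have hS2 : star w * w = S := by
    ext η
    refine ext_inner_right ℂ ?_
    intro u
    rw [ContinuousLinearMap.mul_apply, ContinuousLinearMap.star_eq_adjoint,
      ContinuousLinearMap.adjoint_inner_left]
    rw [hw_apply, hw_apply, ginner]
    have : ((P η : H)) = S η := rfl
    rw [this]
    have : ((P u : H)) = S u := rfl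
    rw [this]
    calc ⟪S η, S u⟫_ℂ = ⟪(ContinuousLinearMap.adjoint S) (S η), u⟫_ℂ := by
          rw [ContinuousLinearMap.adjoint_inner_left]
      _ = ⟪S (S η), u⟫_ℂ := by
          rw [← ContinuousLinearMap.star_eq_adjoint, hSsa.star_eq]
      _ = ⟪S η, u⟫_ℂ := by rw [hSmem _ (hSK η)]
  have hwS : w * S = w := by
    ext η
    rw [ContinuousLinearMap.mul_apply, hw_apply, hw_apply]
    congr 1
    exact Submodule.orthogonalProjectionOnto_mem_subspace_eq_self (P η)
  exact ⟨w, S, hwp, hwS, hS2, hvanish, hcomm⟩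

end AuxPartialIsometry

/-- Let `A` be a MASA of `M`, `ψ` a normal faithful state with `A ⊆ M^ψ` and
periodic modular group `σ^ψ`, `N = M^ψ`, and `E : M → N` the ψ-preserving conditional
expectation obtained by averaging `σ^ψ` over a period.  If `u ∈ M` is a unitary normalizing
`A` with `u f u* = α(f)` for `f ∈ A`, then (i) `E(u) f = α(f) E(u)` for all `f ∈ A`, and
(ii) in the polar decomposition `E(u) = w p`, the positive part `p` lies in `A` and the
partial isometry `w` normalizes `A` inside `N`. -/
theorem condexp_of_normalizing_unitary
    {H : Type*} [NormedAddCommGroup H] [InnerProductSpace ℂ H] [CompleteSpace H]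
    (M A : Set (H →L[ℂ] H)) (hM : IsVonNeumannAlgebraOn M) (hA : IsMasaIn M A)
    (ψ : (H →L[ℂ] H) →ₗ[ℂ] ℂ) (σ : ℝ → (H →L[ℂ] H) →ₗ[ℂ] (H →L[ℂ] H))
    (hψ : IsNFState M ψ) (hσ : IsModularDynamics M ψ σ)
    (hAψ : A ⊆ centralizerState M ψ)
    (T : ℝ) (hT : 0 < T) (hper : ∀ x ∈ M, σ T x = x)
    -- the averaging conditional expectation `E : M → N = M^ψ`
    (E : (H →L[ℂ] H) →ₗ[ℂ] (H →L[ℂ] H))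
    (hE : IsCondExpOnto M (centralizerState M ψ) E)
    (hEψ : ∀ x ∈ M, ψ (E x) = ψ x)
    (hEσ : ∀ t : ℝ, ∀ x ∈ M, E (σ t x) = E x)
    -- a unitary normalizing `A`
    (u : H →L[ℂ] H) (hu : u ∈ M) (huU : IsUnitaryOp u)
    (α : (H →L[ℂ] H) → (H →L[ℂ] H)) (hα : Set.MapsTo α A A)
    (hαu : ∀ f ∈ A, u * f * star u = α f)
    (hnorm : ∀ f ∈ A, star u * f * u ∈ A) :
    (∀ f ∈ A, E u * f = α f * E u) ∧
    ∃ w p : H →L[ℂ] H,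
      E u = w * p ∧ p ∈ A ∧ IsPositiveOp p ∧ p * p = star (E u) * E u ∧
      IsPartialIsometryOp w ∧ w ∈ centralizerState M ψ ∧
      (∀ f ∈ A, w * f * star w ∈ A ∧ star w * f * w ∈ A) := by
    classical
  obtain ⟨hMstar, hMcc⟩ := hM
  obtain ⟨⟨⟨hAstar, hAcc⟩, hAM, hAcomm⟩, hAmax⟩ := hA
  have one_mem_M : (1 : H →L[ℂ] H) ∈ M := by
    rw [← hMcc]; exact Set.one_mem_centralizer
  have mulM : ∀ x ∈ M, ∀ y ∈ M, x * y ∈ M := by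
    intro x hx y hy
    rw [← hMcc] at hx hy ⊢
    exact Set.mul_mem_centralizer hx hy
  have mulA : ∀ x ∈ A, ∀ y ∈ A, x * y ∈ A := by
    intro x hx y hy
    rw [← hAcc] at hx hy ⊢
    exact Set.mul_mem_centralizer hx hy
  set N := centralizerState M ψ with hNdef
  have one_mem_N : (1 : H →L[ℂ] H) ∈ N := ⟨one_mem_M, fun y _ => by rw [one_mul, mul_one]⟩
  obtain ⟨hEmapsTo, hEid, hEbimod, hEposmap⟩ := hE
  set v : H →L[ℂ] H := E u with hvdef
  have hvN : v ∈ N := hEmapsTo hu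
  have hvM : v ∈ M := hvN.1
  -- the unitary moves `A` by `α`
  have key_uf : ∀ f ∈ A, u * f = α f * u := by
    intro f hf
    have h2 : u * f * star u * u = α f * u := by rw [hαu f hf]
    rwa [mul_assoc (u * f), huU.1, mul_one] at h2
  -- part (i)
  have claim1 : ∀ f ∈ A, v * f = α f * v := by
    intro f hf
    have hfN : f ∈ N := hAψ hf
    have hαfN : α f ∈ N := hAψ (hα hf)
    have h1 : E (1 * u * f) = 1 * E u * f := hEbimod 1 one_mem_N u hu f hfN
    have h2 : E (α f * u * 1) = α f * E u * 1 := hEbimod (α f) hαfN u hu 1 one_mem_N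
    rw [one_mul, one_mul] at h1
    rw [mul_one, mul_one] at h2
    rw [hvdef, ← h1, key_uf f hf, h2]
  have hαstar : ∀ f ∈ A, star (α f) = α (star f) := by
    intro f hf
    rw [← hαu f hf, ← hαu (star f) (hAstar f hf)]
    simp [star_mul, mul_assoc]
  have hvα : ∀ f ∈ A, f * star v = star v * α f := by
    intro f hf
    have h := congrArg star (claim1 (star f) (hAstar f hf))
    rw [star_mul, star_mul, star_star, hαstar (star f) (hAstar f hf), star_star] at h
    exact h
  -- `q = v* v` lies in `A`
  have hqM : star v * v ∈ M := mulM _ (hMstar v hvM) _ hvM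
  have hq_commA : ∀ f ∈ A, (star v * v) * f = f * (star v * v) := by
    intro f hf
    calc star v * v * f = star v * (v * f) := by rw [mul_assoc]
      _ = star v * (α f * v) := by rw [claim1 f hf]
      _ = (star v * α f) * v := by rw [mul_assoc]
      _ = (f * star v) * v := by rw [← hvα f hf]
      _ = f * (star v * v) := by rw [mul_assoc]
  have hqA : star v * v ∈ A := hAmax _ hqM hq_commA
  have hq_nonneg : (0 : H →L[ℂ] H) ≤ star v * v := star_mul_self_nonneg v
  have hq_sa : IsSelfAdjoint (star v * v) := .of_nonneg hq_nonneg
  -- the positive square root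
  set p : H →L[ℂ] H := cfc Real.sqrt (star v * v) with hpdef
  have hpp : p * p = star v * v := by
    rw [hpdef, ← cfc_mul Real.sqrt Real.sqrt (star v * v)]
    have hcong : (spectrum ℝ (star v * v)).EqOn (fun x => Real.sqrt x * Real.sqrt x) id :=
      fun x hx => Real.mul_self_sqrt (spectrum_nonneg_of_nonneg hq_nonneg hx)
    rw [cfc_congr hcong, cfc_id ℝ (star v * v)]
  have hp_nonneg : (0 : H →L[ℂ] H) ≤ p := cfc_nonneg (fun x _ => Real.sqrt_nonneg x)
  have hp_sa : IsSelfAdjoint p := .of_nonneg hp_nonneg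
  have hp_pos : IsPositiveOp p := by
    have h := (ContinuousLinearMap.nonneg_iff_isPositive p).mp hp_nonneg
    exact ⟨hp_sa, fun ξ => by
      simpa [ContinuousLinearMap.reApplyInnerSelf, RCLike.re_to_complex] using h.2 ξ⟩
  have hp_commute : ∀ b : H →L[ℂ] H, b * (star v * v) = (star v * v) * b → b * p = p * b :=
    fun b hb => commute_cfc b _ hq_sa hb Real.sqrt
  have hpA : p ∈ A := by
    rw [← hAcc]
    refine Set.mem_centralizer_iff.mpr ?_
    intro m hm
    have hm' := Set.mem_centralizer_iff.mp hm
    exact hp_commute m ((hm' _ hqA).symm)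
  have hpM : p ∈ M := hAM hpA
  have hpN : p ∈ N := hAψ hpA
  -- `v` and `p` have matching norms
  have hnormeq : ∀ ξ : H, ‖v ξ‖ = ‖p ξ‖ := by
    intro ξ
    have hv' : (inner ℂ ((star v * v) ξ) ξ : ℂ) = inner ℂ (v ξ) (v ξ) := by
      rw [ContinuousLinearMap.mul_apply, ContinuousLinearMap.star_eq_adjoint,
        ContinuousLinearMap.adjoint_inner_left]
    have hp' : (inner ℂ ((p * p) ξ) ξ : ℂ) = inner ℂ (p ξ) (p ξ) := by
      rw [ContinuousLinearMap.mul_apply]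
      nth_rewrite 1 [← hp_sa.adjoint_eq]
      rw [ContinuousLinearMap.adjoint_inner_left]
    have h1 : (inner ℂ (v ξ) (v ξ) : ℂ) = inner ℂ (p ξ) (p ξ) := by
      rw [← hv', ← hp', hpp]
    rw [inner_self_eq_norm_sq_to_K, inner_self_eq_norm_sq_to_K] at h1
    have h2 : (‖v ξ‖ : ℝ) ^ 2 = ‖p ξ‖ ^ 2 := by exact_mod_cast h1
    have h3 := congrArg Real.sqrt h2
    rwa [Real.sqrt_sq (norm_nonneg _), Real.sqrt_sq (norm_nonneg _)] at h3
  -- construct the partial isometry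
  obtain ⟨w, S, hwp, hwS, hSw, hvanish, hcommS⟩ := exists_partial_isometry v p hnormeq
  -- the support projection lies in `A`
  have hSA : S ∈ A := by
    rw [← hAcc]
    refine Set.mem_centralizer_iff.mpr ?_
    intro m hm
    have hm' := Set.mem_centralizer_iff.mp hm
    have h1 : m * p = p * m := (hm' p hpA).symm
    have h2 : star m * p = p * star m := by
      have := congrArg star (hm' p hpA)
      rwa [star_mul, star_mul, hp_sa.star_eq] at this
    exact hcommS m h1 h2
  have hSM : S ∈ M := hAM hSA
  have hSN : S ∈ N := hAψ hSA
  -- `w ∈ M`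
  have hwM : w ∈ M := by
    rw [← hMcc]
    refine Set.mem_centralizer_iff.mpr ?_
    intro m hm
    have hm' := Set.mem_centralizer_iff.mp hm
    have hmv : m * v = v * m := (hm' v hvM).symm
    have hmp : m * p = p * m := (hm' p hpM).symm
    have hmS : m * S = S * m := (hm' S hSM).symm
    have hz : (m * w - w * m) * p = 0 := by
      rw [sub_mul, mul_assoc m w p, hwp, mul_assoc w m p, hmp, ← mul_assoc, hwp, hmv,
        sub_self]
    have hz2 := hvanish _ hz
    rw [sub_mul] at hz2
    have h3 : m * w * S = w * m * S := sub_eq_zero.mp hz2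
    calc m * w = m * (w * S) := by rw [hwS]
      _ = m * w * S := by rw [mul_assoc]
      _ = w * m * S := h3
      _ = w * (m * S) := by rw [mul_assoc]
      _ = w * (S * m) := by rw [hmS]
      _ = w * S * m := by rw [mul_assoc]
      _ = w * m := by rw [hwS]
  -- `w` is fixed by the modular group, hence lies in the centralizer
  have hwN : w ∈ N := by
    refine (hσ.fixed_iff w hwM).mpr ?_
    intro t
    have hσv : σ t v = v := (hσ.fixed_iff v hvM).mp hvN t
    have hσp : σ t p = p := (hσ.fixed_iff p hpM).mp hpN t
    have hσS : σ t S = S := (hσ.fixed_iff S hSM).mp hSN t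
    have h1 : σ t w * p = v := by
      calc σ t w * p = σ t w * σ t p := by rw [hσp]
        _ = σ t (w * p) := (hσ.σ_mul t w hwM p hpM).symm
        _ = σ t v := by rw [hwp]
        _ = v := hσv
    have hz : (σ t w - w) * p = 0 := by rw [sub_mul, h1, hwp, sub_self]
    have hz2 := hvanish _ hz
    rw [sub_mul] at hz2
    have h2 : σ t w * S = w * S := sub_eq_zero.mp hz2
    calc σ t w = σ t (w * S) := by rw [hwS]
      _ = σ t w * σ t S := hσ.σ_mul t w hwM S hSM
      _ = σ t w * S := by rw [hσS]
      _ = w * S := h2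
      _ = w := hwS
  -- `w` intertwines `A` and `α`
  have hwf : ∀ f ∈ A, w * f = α f * w := by
    intro f hf
    have hpf : f * p = p * f := hAcomm f hf p hpA
    have hfS : f * S = S * f := hAcomm f hf S hSA
    have h1 : w * f * p = α f * w * p := by
      calc w * f * p = w * (f * p) := by rw [mul_assoc]
        _ = w * (p * f) := by rw [hpf]
        _ = w * p * f := by rw [mul_assoc]
        _ = v * f := by rw [hwp]
        _ = α f * v := claim1 f hf
        _ = α f * (w * p) := by rw [hwp]
        _ = α f * w * p := by rw [mul_assoc]
    have hz : (w * f - α f * w) * p = 0 := by rw [sub_mul, h1, sub_self]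
    have hz2 := hvanish _ hz
    rw [sub_mul] at hz2
    have h2 : w * f * S = α f * w * S := sub_eq_zero.mp hz2
    calc w * f = w * S * f := by rw [hwS]
      _ = w * (S * f) := by rw [mul_assoc]
      _ = w * (f * S) := by rw [hfS]
      _ = w * f * S := by rw [mul_assoc]
      _ = α f * w * S := h2
      _ = α f * (w * S) := by rw [mul_assoc]
      _ = α f * w := by rw [hwS]
  have hwstar : ∀ f ∈ A, f * star w = star w * α f := by
    intro f hf
    have h := congrArg star (hwf (star f) (hAstar f hf))
    rw [star_mul, star_mul, star_star, hαstar (star f) (hAstar f hf), star_star] at h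
    exact h
  -- `α` is surjective on `A`
  have hαsurj : ∀ f ∈ A, ∃ g ∈ A, α g = f := by
    intro f hf
    refine ⟨star u * f * u, hnorm f hf, ?_⟩
    rw [← hαu _ (hnorm f hf)]
    simp only [← mul_assoc]
    rw [huU.2, one_mul, mul_assoc, huU.2, mul_one]
  -- `w w*` lies in `A`
  have hwwM : w * star w ∈ M := mulM _ hwM _ (hMstar w hwM)
  have hwwA : w * star w ∈ A := by
    refine hAmax _ hwwM ?_
    intro f hf
    obtain ⟨g, hg, rfl⟩ := hαsurj f hf
    calc w * star w * α g = w * (star w * α g) := by rw [mul_assoc]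
      _ = w * (g * star w) := by rw [← hwstar g hg]
      _ = w * g * star w := by rw [mul_assoc]
      _ = α g * w * star w := by rw [hwf g hg]
      _ = α g * (w * star w) := by rw [mul_assoc]
  -- conclusion
  refine ⟨claim1, w, p, hwp.symm, hpA, hp_pos, hpp, ?_, hwN, ?_⟩
  · show w * star w * w = w
    rw [mul_assoc, hSw, hwS]
  · intro f hf
    constructor
    · have h : w * f * star w = α f * (w * star w) := by
        rw [hwf f hf, mul_assoc]
      rw [h]
      exact mulA _ (hα hf) _ hwwA
    · obtain ⟨g, hg, rfl⟩ := hαsurj f hf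
      have h : star w * α g * w = g * S := by
        calc star w * α g * w = g * star w * w := by rw [← hwstar g hg]
          _ = g * (star w * w) := by rw [mul_assoc]
          _ = g * S := by rw [hSw]
      rw [h]
      exact mulA _ hg _ hSA

end VNPaper
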